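/- Define l_j := l_0 · ((β_j − α_j)/α_j) · Π_{i ∈ {1,...,m}, i ≠ j} (β_i − α_j)/(α_i − α_j) for j = 1, ..., m. Then for every i = 1, ..., m one has 1 + Σ_{j=1}^m α_j l_j / (l_0 (α_j − β_i)) = 0. -/

import Mathlib

/-!
Write `A = ∏ (X - αᵢ)` and `B = ∏ (X - βᵢ)`. Both are monic of degree `m`, so `B - A` has degree
`< m` and equals its Lagrange interpolant at the nodes `αⱼ`, where it takes the values `B(αⱼ)`.
Evaluating at `βₖ`, where `B` vanishes, gives `-A(βₖ) = A(βₖ) ∑ⱼ wⱼ B(αⱼ) / (βₖ - αⱼ)` with the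
barycentric weights `wⱼ`; dividing by `A(βₖ) ≠ 0` is the claimed identity, up to signs. -/

open Polynomial Finset

namespace Lagrange

variable {F ι : Type*} [Field F] [DecidableEq ι] {s : Finset ι} {α β : ι → F}

theorem nodal_sub_nodal_eq_interpolate (hα : Set.InjOn α s) :
    nodal s β - nodal s α = interpolate s α (fun j => eval (α j) (nodal s β)) := by
  refine eq_interpolate_of_eval_eq _ hα ?_ fun j hj => by
    rw [eval_sub, eval_nodal_at_node hj, sub_zero]
  rw [← degree_nodal (v := β)]
  exact degree_sub_lt_left (by rw [degree_nodal, degree_nodal]) nodal_ne_zero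
    (by rw [nodal_monic.leadingCoeff, nodal_monic.leadingCoeff])

theorem one_add_sum_nodalWeight_eq_zero (hα : Set.InjOn α s) {k : ι} (hk : k ∈ s)
    (hβα : ∀ j ∈ s, β k ≠ α j) :
    1 + ∑ j ∈ s, nodalWeight s α j * (β k - α j)⁻¹ * eval (α j) (nodal s β) = 0 := by
  have h := congrArg (eval (β k)) (nodal_sub_nodal_eq_interpolate (β := β) hα)
  rw [eval_sub, eval_nodal_at_node hk, eval_interpolate_not_at_node _ hβα] at h
  have hA : eval (β k) (nodal s α) ≠ 0 := eval_nodal_not_at_node hβα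
  apply mul_left_cancel₀ hA
  linear_combination -h

theorem nodalWeight_mul_eval_nodal {j : ι} (hj : j ∈ s) :
    nodalWeight s α j * eval (α j) (nodal s β) =
      -(∏ i ∈ s, (β i - α j)) / ∏ i ∈ s.erase j, (α i - α j) := by
  have hnum : ∏ i ∈ s, (β i - α j) = (-1) ^ (#(s.erase j) + 1) * ∏ i ∈ s, (α j - β i) := by
    rw [card_erase_add_one hj, ← prod_neg]; simp only [neg_sub]
  have hden :
      ∏ i ∈ s.erase j, (α i - α j) = (-1) ^ #(s.erase j) * ∏ i ∈ s.erase j, (α j - α i) := by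
    rw [← prod_neg]; simp only [neg_sub]
  rw [nodalWeight, eval_nodal, prod_inv_distrib, hnum, hden]
  field_simp
  ring

theorem one_add_sum_div_eq_zero (hα : Set.InjOn α s) {k : ι} (hk : k ∈ s)
    (hβα : ∀ j ∈ s, β k ≠ α j) :
    1 + ∑ j ∈ s, (∏ i ∈ s, (β i - α j)) / (∏ i ∈ s.erase j, (α i - α j)) / (α j - β k) = 0 := by
  rw [← one_add_sum_nodalWeight_eq_zero hα hk hβα]
  congr 1
  refine sum_congr rfl fun j hj => ?_
  rw [mul_right_comm, nodalWeight_mul_eval_nodal hj, ← neg_sub (β k), div_neg]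
  ring

end Lagrange

theorem Fin.strictMono_of_lt_add_one {γ : Type*} [Preorder γ] {m : ℕ} {f : Fin m → γ}
    (hf : ∀ j : Fin m, ∀ h : j.1 + 1 < m, f j < f ⟨j.1 + 1, h⟩) : StrictMono f := by
  cases m with
  | zero => exact fun j => j.elim0
  | succ n => exact Fin.strictMono_iff_lt_succ.2 fun j => hf j.castSucc (by simp)

section Interlacing

variable {γ : Type*} [LinearOrder γ] {m : ℕ} {α β : Fin m → γ}

theorem strictMono_of_interlacing (hαβ : ∀ j : Fin m, α j < β j)
    (hβα : ∀ j : Fin m, ∀ h : j.1 + 1 < m, β j < α ⟨j.1 + 1, h⟩) : StrictMono α :=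
  Fin.strictMono_of_lt_add_one fun j h => (hαβ j).trans (hβα j h)

theorem ne_of_interlacing (hαβ : ∀ j : Fin m, α j < β j)
    (hβα : ∀ j : Fin m, ∀ h : j.1 + 1 < m, β j < α ⟨j.1 + 1, h⟩) (j k : Fin m) : β k ≠ α j := by
  rcases le_or_gt j k with hjk | hkj
  · exact ((strictMono_of_interlacing hαβ hβα).monotone hjk |>.trans_lt (hαβ k)).ne'
  · have h : k.1 + 1 < m := by omega
    exact ((hβα k h).trans_le ((strictMono_of_interlacing hαβ hβα).monotone
      (Fin.le_def.2 (Nat.succ_le_of_lt hkj)))).ne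

end Interlacing

/-- With `l j = l0 ((β j - α j)/α j) ∏_{i ≠ j} (β i - α j)/(α i - α j)`,
for every `i` one has `1 + ∑ j, α j l j / (l0 (α j - β i)) = 0`. -/
theorem prescribed_lengths_solve_system
    (m : ℕ) (hm : 0 < m)
    (l0 : ℝ) (hl0 : 0 < l0)
    (α β : Fin m → ℝ)
    (hα1 : 0 < α ⟨0, hm⟩)
    (hαβ : ∀ j : Fin m, α j < β j)
    (hβα : ∀ j : Fin m, ∀ h : j.1 + 1 < m, β j < α ⟨j.1 + 1, h⟩)
    (l : Fin m → ℝ)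
    (hldef : ∀ j : Fin m, l j = l0 * ((β j - α j) / α j) *
      ∏ i ∈ Finset.univ.erase j, (β i - α j) / (α i - α j)) :
    ∀ i : Fin m, 1 + ∑ j : Fin m, α j * l j / (l0 * (α j - β i)) = 0 := by
  intro k
  have hα := strictMono_of_interlacing hαβ hβα
  have hαpos : ∀ j, 0 < α j := fun j => hα1.trans_le (hα.monotone (Fin.le_def.2 (Nat.zero_le _)))
  have hsummand : ∀ j, α j * l j / (l0 * (α j - β k)) =
      (∏ i, (β i - α j)) / (∏ i ∈ univ.erase j, (α i - α j)) / (α j - β k) := fun j => by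
    rw [hldef, prod_div_distrib, ← mul_prod_erase univ (fun i => β i - α j) (mem_univ j)]
    field_simp [(hαpos j).ne', hl0.ne']
  rw [sum_congr rfl fun j _ => hsummand j]
  exact Lagrange.one_add_sum_div_eq_zero hα.injective.injOn (mem_univ k)
    fun j _ => ne_of_interlacing hαβ hβα j k
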